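/- arXiv:1606.05716 — 2 statements merged into one kernel-verified Lean document; each statement's English description precedes it below -/
import Mathlib

section
/- The map (F, G) ↦ {F, G}_B := B · (∇_v F × ∇_v G), where B ∈ ℝ³ is a fixed vector and F, G : ℝ³ → ℝ are smooth functions of v, is bilinear and skew-symmetric, and satisfies the Jacobi identity: {{F,G}_B, H}_B + {{G,H}_B, F}_B + {{H,F}_B, G}_B = 0. -/
open Matrix

/-- Gradient of a function on ℝ³ as a vector of partial derivatives. -/
noncomputable def grad3 (F : (Fin 3 → ℝ) → ℝ) (v : Fin 3 → ℝ) : Fin 3 → ℝ :=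
  fun i => fderiv ℝ F v (Pi.single i 1)

/-- The bracket {F,G}_B v = B · (∇F(v) × ∇G(v)). -/
noncomputable def bracketB (B : Fin 3 → ℝ) (F G : (Fin 3 → ℝ) → ℝ) :
    (Fin 3 → ℝ) → ℝ :=
  fun v => B ⬝ᵥ (crossProduct (grad3 F v) (grad3 G v))

section Aux

variable {F G : (Fin 3 → ℝ) → ℝ} {v : Fin 3 → ℝ}

/-- first partial -/
noncomputable def d1 (F : (Fin 3 → ℝ) → ℝ) (v : Fin 3 → ℝ) (j : Fin 3) : ℝ :=
  fderiv ℝ F v (Pi.single j 1)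

/-- second partial -/
noncomputable def d2 (F : (Fin 3 → ℝ) → ℝ) (v : Fin 3 → ℝ) (i j : Fin 3) : ℝ :=
  fderiv ℝ (fderiv ℝ F) v (Pi.single i 1) (Pi.single j 1)

lemma hasFDerivAt_pd (hF : ContDiff ℝ (⊤ : ℕ∞) F) (j : Fin 3) (v : Fin 3 → ℝ) :
    HasFDerivAt (fun w => fderiv ℝ F w (Pi.single j 1))
      ((fderiv ℝ (fderiv ℝ F) v).flip (Pi.single j 1)) v := by
  have h1 : HasFDerivAt (fderiv ℝ F) (fderiv ℝ (fderiv ℝ F) v) v :=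
    (((hF.fderiv_right (m := 1) ((WithTop.coe_le_coe.mpr le_top))).differentiable one_ne_zero) v).hasFDerivAt
  have h2 := h1.clm_apply (hasFDerivAt_const (Pi.single j 1) v)
  simpa using h2

lemma d2_symm (hF : ContDiff ℝ (⊤ : ℕ∞) F) (v : Fin 3 → ℝ) (i j : Fin 3) :
    d2 F v i j = d2 F v j i := by
  have := hF.contDiffAt.isSymmSndFDerivAt (x := v) (by rw [minSmoothness_of_isRCLikeNormedField]; exact WithTop.coe_le_coe.mpr le_top)
  exact this _ _

lemma hasFDerivAt_bracketB (B : Fin 3 → ℝ) (hF : ContDiff ℝ (⊤ : ℕ∞) F) (hG : ContDiff ℝ (⊤ : ℕ∞) G)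
    (v : Fin 3 → ℝ) :
    HasFDerivAt (bracketB B F G)
      ((B 0 • ((fderiv ℝ F v (Pi.single 1 1)) • ((fderiv ℝ (fderiv ℝ G) v).flip (Pi.single 2 1))
              + (fderiv ℝ G v (Pi.single 2 1)) • ((fderiv ℝ (fderiv ℝ F) v).flip (Pi.single 1 1))
            - ((fderiv ℝ F v (Pi.single 2 1)) • ((fderiv ℝ (fderiv ℝ G) v).flip (Pi.single 1 1))
              + (fderiv ℝ G v (Pi.single 1 1)) • ((fderiv ℝ (fderiv ℝ F) v).flip (Pi.single 2 1))))
       + B 1 • ((fderiv ℝ F v (Pi.single 2 1)) • ((fderiv ℝ (fderiv ℝ G) v).flip (Pi.single 0 1))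
              + (fderiv ℝ G v (Pi.single 0 1)) • ((fderiv ℝ (fderiv ℝ F) v).flip (Pi.single 2 1))
            - ((fderiv ℝ F v (Pi.single 0 1)) • ((fderiv ℝ (fderiv ℝ G) v).flip (Pi.single 2 1))
              + (fderiv ℝ G v (Pi.single 2 1)) • ((fderiv ℝ (fderiv ℝ F) v).flip (Pi.single 0 1))))
       + B 2 • ((fderiv ℝ F v (Pi.single 0 1)) • ((fderiv ℝ (fderiv ℝ G) v).flip (Pi.single 1 1))
              + (fderiv ℝ G v (Pi.single 1 1)) • ((fderiv ℝ (fderiv ℝ F) v).flip (Pi.single 0 1))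
            - ((fderiv ℝ F v (Pi.single 1 1)) • ((fderiv ℝ (fderiv ℝ G) v).flip (Pi.single 0 1))
              + (fderiv ℝ G v (Pi.single 0 1)) • ((fderiv ℝ (fderiv ℝ F) v).flip (Pi.single 1 1)))))) v := by
  have key : bracketB B F G = fun w =>
      B 0 * (fderiv ℝ F w (Pi.single 1 1) * fderiv ℝ G w (Pi.single 2 1)
           - fderiv ℝ F w (Pi.single 2 1) * fderiv ℝ G w (Pi.single 1 1))
    + B 1 * (fderiv ℝ F w (Pi.single 2 1) * fderiv ℝ G w (Pi.single 0 1)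
           - fderiv ℝ F w (Pi.single 0 1) * fderiv ℝ G w (Pi.single 2 1))
    + B 2 * (fderiv ℝ F w (Pi.single 0 1) * fderiv ℝ G w (Pi.single 1 1)
           - fderiv ℝ F w (Pi.single 1 1) * fderiv ℝ G w (Pi.single 0 1)) := by
    funext w
    simp [bracketB, cross_apply, dotProduct, Fin.sum_univ_three, grad3]
  rw [key]
  exact ((((hasFDerivAt_pd hF 1 v).mul (hasFDerivAt_pd hG 2 v)).sub
          ((hasFDerivAt_pd hF 2 v).mul (hasFDerivAt_pd hG 1 v))).const_mul (B 0)).add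
        ((((hasFDerivAt_pd hF 2 v).mul (hasFDerivAt_pd hG 0 v)).sub
          ((hasFDerivAt_pd hF 0 v).mul (hasFDerivAt_pd hG 2 v))).const_mul (B 1)) |>.add
        ((((hasFDerivAt_pd hF 0 v).mul (hasFDerivAt_pd hG 1 v)).sub
          ((hasFDerivAt_pd hF 1 v).mul (hasFDerivAt_pd hG 0 v))).const_mul (B 2))

lemma grad3_bracketB (B : Fin 3 → ℝ) (hF : ContDiff ℝ (⊤ : ℕ∞) F) (hG : ContDiff ℝ (⊤ : ℕ∞) G)
    (v : Fin 3 → ℝ) (i : Fin 3) :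
    grad3 (bracketB B F G) v i =
      B 0 * (d1 F v 1 * d2 G v i 2 + d1 G v 2 * d2 F v i 1
           - (d1 F v 2 * d2 G v i 1 + d1 G v 1 * d2 F v i 2))
    + B 1 * (d1 F v 2 * d2 G v i 0 + d1 G v 0 * d2 F v i 2
           - (d1 F v 0 * d2 G v i 2 + d1 G v 2 * d2 F v i 0))
    + B 2 * (d1 F v 0 * d2 G v i 1 + d1 G v 1 * d2 F v i 0
           - (d1 F v 1 * d2 G v i 0 + d1 G v 0 * d2 F v i 1)) := by
  have h := (hasFDerivAt_bracketB B hF hG v).fderiv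
  show fderiv ℝ (bracketB B F G) v (Pi.single i 1) = _
  rw [h]
  simp [d1, d2, ContinuousLinearMap.add_apply, ContinuousLinearMap.sub_apply,
    ContinuousLinearMap.smul_apply, ContinuousLinearMap.flip_apply, smul_eq_mul]

end Aux

theorem bracketB_bilinear_skew_jacobi (B : Fin 3 → ℝ) :
    -- bilinearity
    (∀ (F G H : (Fin 3 → ℝ) → ℝ), ContDiff ℝ (⊤ : ℕ∞) F → ContDiff ℝ (⊤ : ℕ∞) G → ContDiff ℝ (⊤ : ℕ∞) H →
      ∀ (α β : ℝ) (v : Fin 3 → ℝ),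
        bracketB B (fun x => α * F x + β * G x) H v
          = α * bracketB B F H v + β * bracketB B G H v ∧
        bracketB B H (fun x => α * F x + β * G x) v
          = α * bracketB B H F v + β * bracketB B H G v) ∧
    -- skew-symmetry
    (∀ (F G : (Fin 3 → ℝ) → ℝ), ContDiff ℝ (⊤ : ℕ∞) F → ContDiff ℝ (⊤ : ℕ∞) G →
      ∀ v, bracketB B F G v = - bracketB B G F v) ∧
    -- Jacobi identity
    (∀ (F G H : (Fin 3 → ℝ) → ℝ), ContDiff ℝ (⊤ : ℕ∞) F → ContDiff ℝ (⊤ : ℕ∞) G → ContDiff ℝ (⊤ : ℕ∞) H →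
      ∀ v, bracketB B (bracketB B F G) H v + bracketB B (bracketB B G H) F v
            + bracketB B (bracketB B H F) G v = 0) := by
  refine ⟨?_, ?_, ?_⟩
  · intro F G H hF hG hH α β v
    have hlin : ∀ i : Fin 3, grad3 (fun x => α * F x + β * G x) v i
        = α * grad3 F v i + β * grad3 G v i := by
      intro i
      have dF : DifferentiableAt ℝ F v := (hF.differentiable (by simp)).differentiableAt
      have dG : DifferentiableAt ℝ G v := (hG.differentiable (by simp)).differentiableAt
      have : fderiv ℝ (fun x => α * F x + β * G x) v
          = α • fderiv ℝ F v + β • fderiv ℝ G v := by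
        rw [fderiv_fun_add (dF.const_mul α) (dG.const_mul β), fderiv_const_mul dF,
          fderiv_const_mul dG]
      simp [grad3, this]
    constructor <;>
    · simp only [bracketB, cross_apply, dotProduct, Fin.sum_univ_three, hlin]
      simp [Matrix.cons_val_zero, Matrix.cons_val_one]
      ring
  · intro F G hF hG v
    simp only [bracketB, cross_apply, dotProduct, Fin.sum_univ_three]
    simp
    ring
  · intro F G H hF hG hH v
    have expand : ∀ (K L : (Fin 3 → ℝ) → ℝ), bracketB B K L v
        = B 0 * (grad3 K v 1 * grad3 L v 2 - grad3 K v 2 * grad3 L v 1)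
        + B 1 * (grad3 K v 2 * grad3 L v 0 - grad3 K v 0 * grad3 L v 2)
        + B 2 * (grad3 K v 0 * grad3 L v 1 - grad3 K v 1 * grad3 L v 0) := by
      intro K L
      simp [bracketB, cross_apply, dotProduct, Fin.sum_univ_three]
    have gH : ∀ j, grad3 H v j = d1 H v j := fun _ => rfl
    have gF : ∀ j, grad3 F v j = d1 F v j := fun _ => rfl
    have gG : ∀ j, grad3 G v j = d1 G v j := fun _ => rfl
    rw [expand, expand, expand]
    rw [grad3_bracketB B hF hG, grad3_bracketB B hF hG, grad3_bracketB B hF hG,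
        grad3_bracketB B hG hH, grad3_bracketB B hG hH, grad3_bracketB B hG hH,
        grad3_bracketB B hH hF, grad3_bracketB B hH hF, grad3_bracketB B hH hF]
    simp only [gH, gF, gG]
    have sF := d2_symm hF v
    have sG := d2_symm hG v
    have sH := d2_symm hH v
    -- rewrite all second partials into a canonical (sorted) order
    rw [show d2 F v 1 0 = d2 F v 0 1 from sF 1 0, show d2 F v 2 0 = d2 F v 0 2 from sF 2 0,
        show d2 F v 2 1 = d2 F v 1 2 from sF 2 1,
        show d2 G v 1 0 = d2 G v 0 1 from sG 1 0, show d2 G v 2 0 = d2 G v 0 2 from sG 2 0,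
        show d2 G v 2 1 = d2 G v 1 2 from sG 2 1,
        show d2 H v 1 0 = d2 H v 0 1 from sH 1 0, show d2 H v 2 0 = d2 H v 0 2 from sH 2 0,
        show d2 H v 2 1 = d2 H v 1 2 from sH 2 1]
    ring
end

section
/- Let H(X, V, E, B) = ½ Σₛ ωₛ |Vₛ|² + ½ Eᵀ We E + ½ Bᵀ Wb B, where We, Wb are symmetric matrices. Along any solution of the semi-discrete Vlasov–Maxwell system Ẋₛ = Vₛ, V̇ₛ = WeS(Xₛ) E + Vₛ × (WbS(Xₛ) B), Ė = We⁻¹(K B − Σₛ ωₛ WeS(Xₛ)ᵀ Vₛ), Ḃ = −Wb⁻¹ Kᵀ E, where WeS(Xₛ) denotes a 3×Ne matrix-valued function of Xₛ and WbS(Xₛ) a 3×Nb matrix-valued function, the energy H is conserved: dH/dt = 0. -/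
open Matrix

private lemma hasDerivAt_dot {n : ℕ} {u v : ℝ → Fin n → ℝ} {u' v' : Fin n → ℝ} {t : ℝ}
    (hu : HasDerivAt u u' t) (hv : HasDerivAt v v' t) :
    HasDerivAt (fun τ => u τ ⬝ᵥ v τ) (u' ⬝ᵥ v t + u t ⬝ᵥ v') t := by
  have h := HasDerivAt.fun_sum (fun i (_ : i ∈ Finset.univ) =>
    ((hasDerivAt_pi.1 hu i).mul (hasDerivAt_pi.1 hv i)))
  simpa [dotProduct, Finset.sum_add_distrib] using h

private lemma hasDerivAt_mulVec {m n : ℕ} (A : Matrix (Fin m) (Fin n) ℝ)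
    {u : ℝ → Fin n → ℝ} {u' : Fin n → ℝ} {t : ℝ} (hu : HasDerivAt u u' t) :
    HasDerivAt (fun τ => A.mulVec (u τ)) (A.mulVec u') t := by
  rw [hasDerivAt_pi]
  intro i
  have h := HasDerivAt.fun_sum (fun j (_ : j ∈ Finset.univ) =>
    (hasDerivAt_pi.1 hu j).const_mul (A i j))
  simpa [Matrix.mulVec, dotProduct] using h

private lemma sym_dot {n : ℕ} {A : Matrix (Fin n) (Fin n) ℝ} (hA : Aᵀ = A)
    (u v : Fin n → ℝ) : u ⬝ᵥ A.mulVec v = v ⬝ᵥ A.mulVec u := by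
  rw [Matrix.dotProduct_mulVec, ← Matrix.mulVec_transpose, hA, dotProduct_comm]

theorem energy_conserved_semidiscrete_VM {N Ne Nb : ℕ}
    (ω : Fin N → ℝ) (hω : ∀ s, 0 < ω s)
    (We : Matrix (Fin Ne) (Fin Ne) ℝ) (Wb : Matrix (Fin Nb) (Fin Nb) ℝ)
    (K : Matrix (Fin Ne) (Fin Nb) ℝ)
    (hWeSym : Weᵀ = We) (hWbSym : Wbᵀ = Wb)
    (hWePD : We.PosDef) (hWbPD : Wb.PosDef)
    (WeS : (Fin 3 → ℝ) → Matrix (Fin 3) (Fin Ne) ℝ)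
    (WbS : (Fin 3 → ℝ) → Matrix (Fin 3) (Fin Nb) ℝ)
    (hWeS : ∀ i j, ContDiff ℝ (⊤ : ℕ∞) (fun x => WeS x i j))
    (hWbS : ∀ i j, ContDiff ℝ (⊤ : ℕ∞) (fun x => WbS x i j))
    (X V : ℝ → Fin N → Fin 3 → ℝ)
    (E : ℝ → Fin Ne → ℝ) (B : ℝ → Fin Nb → ℝ)
    (hX : ∀ t, HasDerivAt X (V t) t)
    (hV : ∀ s t, HasDerivAt (fun τ => V τ s)
      ((WeS (X t s)).mulVec (E t)
        + crossProduct (V t s) ((WbS (X t s)).mulVec (B t))) t)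
    (hE : ∀ t, HasDerivAt E (We⁻¹.mulVec (K.mulVec (B t)
      - ∑ s, ω s • (WeS (X t s))ᵀ.mulVec (V t s))) t)
    (hB : ∀ t, HasDerivAt B (-(Wb⁻¹.mulVec (Kᵀ.mulVec (E t)))) t) :
    ∀ t, deriv (fun τ =>
        (1/2) * ∑ s, ω s * (V τ s ⬝ᵥ V τ s)
        + (1/2) * (E τ ⬝ᵥ We.mulVec (E τ))
        + (1/2) * (B τ ⬝ᵥ Wb.mulVec (B τ))) t = 0 := by
  intro t
  set V' : Fin N → Fin 3 → ℝ := fun s =>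
    (WeS (X t s)).mulVec (E t) + crossProduct (V t s) ((WbS (X t s)).mulVec (B t)) with hV'def
  set E' : Fin Ne → ℝ :=
    We⁻¹.mulVec (K.mulVec (B t) - ∑ s, ω s • (WeS (X t s))ᵀ.mulVec (V t s)) with hE'def
  set B' : Fin Nb → ℝ := -(Wb⁻¹.mulVec (Kᵀ.mulVec (E t))) with hB'def
  have h1 : HasDerivAt (fun τ => (1/2) * ∑ s, ω s * (V τ s ⬝ᵥ V τ s))
      ((1/2) * ∑ s, ω s * (V' s ⬝ᵥ V t s + V t s ⬝ᵥ V' s)) t :=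
    (HasDerivAt.fun_sum (fun s _ => (hasDerivAt_dot (hV s t) (hV s t)).const_mul (ω s))).const_mul _
  have h2 : HasDerivAt (fun τ => (1/2) * (E τ ⬝ᵥ We.mulVec (E τ)))
      ((1/2) * (E' ⬝ᵥ We.mulVec (E t) + E t ⬝ᵥ We.mulVec E')) t :=
    (hasDerivAt_dot (hE t) (hasDerivAt_mulVec We (hE t))).const_mul _
  have h3 : HasDerivAt (fun τ => (1/2) * (B τ ⬝ᵥ Wb.mulVec (B τ)))
      ((1/2) * (B' ⬝ᵥ Wb.mulVec (B t) + B t ⬝ᵥ Wb.mulVec B')) t :=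
    (hasDerivAt_dot (hB t) (hasDerivAt_mulVec Wb (hB t))).const_mul _
  rw [((h1.fun_add h2).fun_add h3).deriv]
  -- simplify the pairs using symmetry
  have hWeInv : We.mulVec (We⁻¹.mulVec (K.mulVec (B t)
      - ∑ s, ω s • (WeS (X t s))ᵀ.mulVec (V t s)))
      = K.mulVec (B t) - ∑ s, ω s • (WeS (X t s))ᵀ.mulVec (V t s) := by
    rw [Matrix.mulVec_mulVec, Matrix.mul_nonsing_inv _ (isUnit_iff_ne_zero.2 hWePD.det_pos.ne'),
      Matrix.one_mulVec]
  have hWbInv : Wb.mulVec (Wb⁻¹.mulVec (Kᵀ.mulVec (E t))) = Kᵀ.mulVec (E t) := by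
    rw [Matrix.mulVec_mulVec, Matrix.mul_nonsing_inv _ (isUnit_iff_ne_zero.2 hWbPD.det_pos.ne'),
      Matrix.one_mulVec]
  have hEterm : E' ⬝ᵥ We.mulVec (E t) + E t ⬝ᵥ We.mulVec E'
      = 2 * ((K.mulVec (B t) - ∑ s, ω s • (WeS (X t s))ᵀ.mulVec (V t s)) ⬝ᵥ E t) := by
    rw [sym_dot hWeSym (E t) E', hE'def, dotProduct_comm _ (E t),
      Matrix.dotProduct_mulVec, ← Matrix.mulVec_transpose, hWeSym, hWeInv,
      dotProduct_comm (E t)]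
    ring
  have hBterm : B' ⬝ᵥ Wb.mulVec (B t) + B t ⬝ᵥ Wb.mulVec B'
      = 2 * (-(Kᵀ.mulVec (E t)) ⬝ᵥ B t) := by
    rw [sym_dot hWbSym (B t) B', hB'def, dotProduct_comm _ (B t),
      Matrix.dotProduct_mulVec, ← Matrix.mulVec_transpose, hWbSym,
      Matrix.mulVec_neg, hWbInv, dotProduct_comm (B t)]
    ring
  have hVterm : ∀ s, V' s ⬝ᵥ V t s + V t s ⬝ᵥ V' s
      = 2 * ((WeS (X t s))ᵀ.mulVec (V t s) ⬝ᵥ E t) := by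
    intro s
    have hcross : V t s ⬝ᵥ crossProduct (V t s) ((WbS (X t s)).mulVec (B t)) = 0 :=
      dot_self_cross _ _
    rw [dotProduct_comm (V' s), hV'def]
    simp only [dotProduct_add, hcross, add_zero]
    rw [Matrix.dotProduct_mulVec, ← Matrix.mulVec_transpose]
    ring
  simp only [hEterm, hBterm, hVterm]
  have hsumdot : (∑ s, ω s • (WeS (X t s))ᵀ.mulVec (V t s)) ⬝ᵥ E t
      = ∑ s, ω s * ((WeS (X t s))ᵀ.mulVec (V t s) ⬝ᵥ E t) := by
    simp only [dotProduct, Finset.sum_apply, Finset.sum_mul, Pi.smul_apply,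
      smul_eq_mul, Finset.mul_sum, mul_assoc]
    rw [Finset.sum_comm]
  have hK : Kᵀ.mulVec (E t) ⬝ᵥ B t = K.mulVec (B t) ⬝ᵥ E t := by
    rw [dotProduct_comm, Matrix.dotProduct_mulVec, ← Matrix.mulVec_transpose,
      Matrix.transpose_transpose, dotProduct_comm]
  have hsum : ∑ x, ω x * (2 * ((WeS (X t x))ᵀ.mulVec (V t x) ⬝ᵥ E t))
      = 2 * ∑ x, ω x * ((WeS (X t x))ᵀ.mulVec (V t x) ⬝ᵥ E t) := by
    rw [Finset.mul_sum]; exact Finset.sum_congr rfl fun x _ => by ring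
  rw [sub_dotProduct, hsumdot, neg_dotProduct, hK, hsum]
  ring
end
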